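/- Let X be a random n × n Hermitian matrix satisfying the convex concentration property with constant c > 0, let 1 ≤ k ≤ n, and let f : ℝ → ℝ be convex, 1-Lipschitz, attaining its infimum on ℝ. Then for any t > 0, P(|tr_[k] f(X) − E tr_[k] f(X)| > t) ≤ c^{−1} exp(−c t² / k). -/

import Mathlib

open MeasureTheory

/-- The Frobenius (Hilbert–Schmidt) norm of a complex matrix. -/
noncomputable def frobNorm {n : ℕ} (A : Matrix (Fin n) (Fin n) ℂ) : ℝ :=
  Real.sqrt (∑ i, ∑ j, ‖A i j‖ ^ 2)

/-- The sum of the `k` largest values of `v : Fin n → ℝ`. -/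
noncomputable def sumTopK {n : ℕ} (k : ℕ) (v : Fin n → ℝ) : ℝ :=
  ⨆ s : {s : Finset (Fin n) // s.card = k}, ∑ i ∈ (s : Finset (Fin n)), v i

variable {n k : ℕ}

def toEuc {n : ℕ} (x : Fin n → ℂ) : EuclideanSpace ℂ (Fin n) := WithLp.toLp 2 x

noncomputable def quadF {n : ℕ} (A : Matrix (Fin n) (Fin n) ℂ)
    (v : EuclideanSpace ℂ (Fin n)) : ℝ :=
  (inner ℂ v (toEuc (A.mulVec v)) : ℂ).re

lemma frobNorm_nonneg (A : Matrix (Fin n) (Fin n) ℂ) : 0 ≤ frobNorm A :=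
  Real.sqrt_nonneg _

noncomputable def rowVec (A : Matrix (Fin n) (Fin n) ℂ) (r : Fin n) :
    EuclideanSpace ℂ (Fin n) := WithLp.toLp 2 (fun j => (starRingEnd ℂ) (A r j))

lemma mulVec_apply_eq_inner (A : Matrix (Fin n) (Fin n) ℂ) (v : EuclideanSpace ℂ (Fin n))
    (r : Fin n) : A.mulVec v r = (inner ℂ (rowVec A r) v : ℂ) := by
  simp [Matrix.mulVec, dotProduct, PiLp.inner_apply, rowVec, mul_comm]

lemma norm_rowVec_sq (A : Matrix (Fin n) (Fin n) ℂ) (r : Fin n) :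
    ‖rowVec A r‖ ^ 2 = ∑ j, ‖A r j‖ ^ 2 := by
  rw [EuclideanSpace.norm_eq, Real.sq_sqrt (by positivity)]
  simp [rowVec]

lemma norm_mulVec_sq (A : Matrix (Fin n) (Fin n) ℂ) (v : EuclideanSpace ℂ (Fin n)) :
    ‖toEuc (A.mulVec v)‖ ^ 2 = ∑ r, ‖(inner ℂ (rowVec A r) v : ℂ)‖ ^ 2 := by
  rw [EuclideanSpace.norm_eq, Real.sq_sqrt (by positivity)]
  exact Finset.sum_congr rfl fun r _ => by
    rw [show (toEuc (A.mulVec v)) r = A.mulVec v r from rfl, mulVec_apply_eq_inner]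

lemma abs_quadF_le_norm_mulVec (A : Matrix (Fin n) (Fin n) ℂ) {v : EuclideanSpace ℂ (Fin n)}
    (hv : ‖v‖ = 1) : |quadF A v| ≤ ‖toEuc (A.mulVec v)‖ := by
  refine (Complex.abs_re_le_norm _).trans ?_
  have := norm_inner_le_norm (𝕜 := ℂ) v (toEuc (A.mulVec v))
  rwa [hv, one_mul] at this

lemma norm_mulVec_le (A : Matrix (Fin n) (Fin n) ℂ) {v : EuclideanSpace ℂ (Fin n)}
    (hv : ‖v‖ = 1) : ‖toEuc (A.mulVec v)‖ ≤ frobNorm A := by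
  have hb : ‖toEuc (A.mulVec v)‖ ^ 2 ≤ frobNorm A ^ 2 := by
    rw [norm_mulVec_sq, frobNorm, Real.sq_sqrt (by positivity)]
    refine Finset.sum_le_sum fun r _ => ?_
    calc ‖(inner ℂ (rowVec A r) v : ℂ)‖ ^ 2 ≤ (‖rowVec A r‖ * ‖v‖) ^ 2 :=
          pow_le_pow_left₀ (norm_nonneg _) (norm_inner_le_norm _ _) 2
      _ = ∑ j, ‖A r j‖ ^ 2 := by rw [hv, mul_one, norm_rowVec_sq]
  exact (pow_le_pow_iff_left₀ (norm_nonneg _) (frobNorm_nonneg A) (by norm_num)).mp hb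

lemma abs_quadF_le (A : Matrix (Fin n) (Fin n) ℂ) {v : EuclideanSpace ℂ (Fin n)}
    (hv : ‖v‖ = 1) : |quadF A v| ≤ frobNorm A :=
  (abs_quadF_le_norm_mulVec A hv).trans (norm_mulVec_le A hv)

lemma sum_sq_quadF_le (A : Matrix (Fin n) (Fin n) ℂ) {v : Fin k → EuclideanSpace ℂ (Fin n)}
    (hv : Orthonormal ℂ v) : ∑ i, quadF A (v i) ^ 2 ≤ frobNorm A ^ 2 := by
  calc ∑ i, quadF A (v i) ^ 2
      ≤ ∑ i, ∑ r, ‖(inner ℂ (rowVec A r) (v i) : ℂ)‖ ^ 2 := by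
        refine Finset.sum_le_sum fun i _ => ?_
        rw [← norm_mulVec_sq]
        calc quadF A (v i) ^ 2 = |quadF A (v i)| ^ 2 := (sq_abs _).symm
          _ ≤ ‖toEuc (A.mulVec (v i))‖ ^ 2 :=
            pow_le_pow_left₀ (abs_nonneg _) (abs_quadF_le_norm_mulVec A (hv.1 i)) 2
    _ = ∑ r, ∑ i, ‖(inner ℂ (rowVec A r) (v i) : ℂ)‖ ^ 2 := Finset.sum_comm
    _ ≤ ∑ r, ‖rowVec A r‖ ^ 2 := by
        refine Finset.sum_le_sum fun r _ => ?_
        have h := hv.sum_inner_products_le (s := Finset.univ) (rowVec A r)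
        refine le_trans (le_of_eq ?_) h
        exact Finset.sum_congr rfl fun i _ => by rw [norm_inner_symm]
    _ = frobNorm A ^ 2 := by
        rw [frobNorm, Real.sq_sqrt (by positivity)]
        exact Finset.sum_congr rfl fun r _ => norm_rowVec_sq A r

lemma quadF_sub (A B : Matrix (Fin n) (Fin n) ℂ) (v : EuclideanSpace ℂ (Fin n)) :
    quadF (A - B) v = quadF A v - quadF B v := by
  unfold quadF
  rw [show toEuc ((A - B).mulVec v) = toEuc (A.mulVec v) - toEuc (B.mulVec v) by
    rw [show (A - B).mulVec v = A.mulVec v - B.mulVec v from Matrix.sub_mulVec A B v]; rfl]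
  rw [inner_sub_right, Complex.sub_re]

lemma quadF_combo (A B : Matrix (Fin n) (Fin n) ℂ) (v : EuclideanSpace ℂ (Fin n))
    (a b : ℝ) : quadF (a • A + b • B) v = a * quadF A v + b * quadF B v := by
  unfold quadF
  have hsm : ∀ (r : ℝ) (M : Matrix (Fin n) (Fin n) ℂ),
      (r • M).mulVec v = (r : ℂ) • (M.mulVec v) := by
    intro r M
    funext j
    simp [Matrix.mulVec, dotProduct, Finset.mul_sum, Complex.real_smul, mul_assoc,
      Matrix.smul_apply]
  rw [show toEuc ((a • A + b • B).mulVec v)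
      = (a:ℂ) • toEuc (A.mulVec v) + (b:ℂ) • toEuc (B.mulVec v) by
    rw [show (a • A + b • B).mulVec v = (a • A).mulVec v + (b • B).mulVec v from
      Matrix.add_mulVec _ _ v, hsm, hsm]; rfl]
  rw [inner_add_right, inner_smul_right, inner_smul_right]
  simp [Complex.add_re, Complex.mul_re]

lemma inner_mulVec_hermitian {A : Matrix (Fin n) (Fin n) ℂ} (hA : A.IsHermitian)
    (x y : EuclideanSpace ℂ (Fin n)) :
    (inner ℂ (toEuc (A.mulVec x)) y : ℂ) = inner ℂ x (toEuc (A.mulVec y)) := by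
  have happ : ∀ i j, (starRingEnd ℂ) (A i j) = A j i := fun i j => by
    conv_rhs => rw [← hA]
    simp [Matrix.conjTranspose_apply]
  simp only [PiLp.inner_apply, RCLike.inner_apply, toEuc, Matrix.mulVec, dotProduct,
    map_sum, map_mul, Finset.sum_mul, Finset.mul_sum]
  rw [Finset.sum_comm]
  refine Finset.sum_congr rfl fun j _ => Finset.sum_congr rfl fun i _ => ?_
  rw [happ]
  ring

lemma quadF_eq_sum_eigen {A : Matrix (Fin n) (Fin n) ℂ} (hA : A.IsHermitian)
    (v : EuclideanSpace ℂ (Fin n)) :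
    quadF A v = ∑ j, hA.eigenvalues j * ‖(inner ℂ (hA.eigenvectorBasis j) v : ℂ)‖ ^ 2 := by
  set u := hA.eigenvectorBasis with hu
  have key : (inner ℂ v (toEuc (A.mulVec v)) : ℂ)
      = ∑ j, ((hA.eigenvalues j : ℂ)) * ((‖(inner ℂ (u j) v : ℂ)‖ : ℂ)) ^ 2 := by
    rw [← OrthonormalBasis.sum_inner_mul_inner u v (toEuc (A.mulVec v))]
    refine Finset.sum_congr rfl fun j _ => ?_
    have h1 : (inner ℂ (u j) (toEuc (A.mulVec v)) : ℂ)
        = (hA.eigenvalues j : ℂ) * inner ℂ (u j) v := by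
      have h2 : (inner ℂ (toEuc (A.mulVec (u j))) v : ℂ) = inner ℂ (u j) (toEuc (A.mulVec v)) :=
        inner_mulVec_hermitian hA (u j) v
      rw [← h2]
      have h3 : toEuc (A.mulVec (u j)) = (hA.eigenvalues j : ℂ) • (u j : EuclideanSpace ℂ (Fin n)) := by
        have := hA.mulVec_eigenvectorBasis j
        rw [show toEuc (A.mulVec (u j)) = toEuc (A.mulVec ⇑(u j)) from rfl]
        rw [this]
        ext i
        simp [toEuc, Complex.real_smul, hu]
      rw [h3, inner_smul_left, Complex.conj_ofReal]
    rw [h1]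
    have h4 : (inner ℂ v (u j) : ℂ) = (starRingEnd ℂ) (inner ℂ (u j) v : ℂ) :=
      (inner_conj_symm _ _).symm
    rw [h4]
    rw [show (starRingEnd ℂ) (inner ℂ (u j) v : ℂ) * ((hA.eigenvalues j : ℂ) * inner ℂ (u j) v)
        = (hA.eigenvalues j : ℂ) * ((starRingEnd ℂ) (inner ℂ (u j) v : ℂ) * inner ℂ (u j) v) by ring]
    rw [Complex.conj_mul']
  unfold quadF
  rw [key, Complex.re_sum]
  simp [← Complex.ofReal_pow, ← Complex.ofReal_mul]

lemma sumTopK_nonempty (hkn : k ≤ n) : Nonempty {s : Finset (Fin n) // s.card = k} := by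
  obtain ⟨s, -, hs⟩ := Finset.exists_subset_card_eq (s := (Finset.univ : Finset (Fin n))) (n := k)
    (by simpa using hkn)
  exact ⟨⟨s, hs⟩⟩

lemma bddAbove_sumTopK (μ : Fin n → ℝ) :
    BddAbove (Set.range fun s : {s : Finset (Fin n) // s.card = k} =>
      ∑ i ∈ (s : Finset (Fin n)), μ i) :=
  Set.Finite.bddAbove (Set.finite_range _)

lemma le_sumTopK (μ : Fin n → ℝ) (s : Finset (Fin n)) (hs : s.card = k) :
    ∑ i ∈ s, μ i ≤ sumTopK k μ :=
  le_ciSup (bddAbove_sumTopK μ) ⟨s, hs⟩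

lemma sumTopK_le (hkn : k ≤ n) (μ : Fin n → ℝ) (b : ℝ)
    (h : ∀ s : Finset (Fin n), s.card = k → ∑ i ∈ s, μ i ≤ b) : sumTopK k μ ≤ b := by
  have := sumTopK_nonempty (n := n) (k := k) hkn
  exact ciSup_le fun s => h s.1 s.2

/-- the rearrangement bound: a `[0,1]`-valued weight with total mass `k` gives at most the
top-`k` sum. -/
lemma weighted_le_sumTopK (hk1 : 1 ≤ k) (hkn : k ≤ n) (μ c : Fin n → ℝ)
    (h0 : ∀ j, 0 ≤ c j) (h1 : ∀ j, c j ≤ 1) (hsum : ∑ j, c j = (k : ℝ)) :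
    ∑ j, c j * μ j ≤ sumTopK k μ := by
  classical
  have hn1 : 1 ≤ n := hk1.trans hkn
  set σ : Equiv.Perm (Fin n) := Tuple.sort μ with hσ
  have hmono : Monotone (μ ∘ σ) := Tuple.monotone_sort μ
  -- the top-k index set
  have hlt : ∀ i : Fin k, n - k + (i : ℕ) < n := fun i => by omega
  set e : Fin k → Fin n := fun i => σ ⟨n - k + (i : ℕ), hlt i⟩ with he
  have hinj : Function.Injective e := by
    intro a b hab
    have := σ.injective hab
    have h2 : n - k + (a : ℕ) = n - k + (b : ℕ) := congrArg Fin.val this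
    exact Fin.ext (by omega)
  set S : Finset (Fin n) := Finset.image e Finset.univ with hS
  have hcard : S.card = k := by
    rw [hS, Finset.card_image_of_injective _ hinj, Finset.card_univ, Fintype.card_fin]
  -- membership characterization
  have hmem : ∀ j : Fin n, j ∈ S ↔ n - k ≤ ((σ.symm j : Fin n) : ℕ) := by
    intro j
    constructor
    · rintro hj
      rw [hS, Finset.mem_image] at hj
      obtain ⟨i, -, rfl⟩ := hj
      rw [he]
      simp only [Equiv.symm_apply_apply]
      omega
    · intro hj
      rw [hS, Finset.mem_image]
      have hjlt : ((σ.symm j : Fin n) : ℕ) < n := (σ.symm j).isLt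
      refine ⟨⟨((σ.symm j : Fin n) : ℕ) - (n - k), by omega⟩, Finset.mem_univ _, ?_⟩
      rw [he]
      have hfix : (⟨n - k + (((σ.symm j : Fin n) : ℕ) - (n - k)),
          (by omega : n - k + (((σ.symm j : Fin n) : ℕ) - (n - k)) < n)⟩ : Fin n) = σ.symm j :=
        Fin.ext (by simp only [Fin.val_mk]; omega)
      simp only [Fin.val_mk]
      rw [hfix, Equiv.apply_symm_apply]
  -- the threshold value
  set m : ℝ := μ (σ ⟨n - k, by omega⟩) with hm
  have hge : ∀ j ∈ S, m ≤ μ j := by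
    intro j hj
    have h2 := (hmem j).mp hj
    have : μ (σ (σ.symm j)) = μ j := by rw [Equiv.apply_symm_apply]
    calc m ≤ (μ ∘ σ) (σ.symm j) := hmono (by simpa [Fin.le_def] using h2)
      _ = μ j := by simp
  have hle : ∀ j, j ∉ S → μ j ≤ m := by
    intro j hj
    have h2 : ((σ.symm j : Fin n) : ℕ) < n - k := by
      by_contra h3
      exact hj ((hmem j).mpr (by omega))
    calc μ j = (μ ∘ σ) (σ.symm j) := by simp
      _ ≤ m := hmono (by simp [Fin.le_def]; omega)
  -- now the rearrangement argument
  set d : Fin n → ℝ := fun j => c j - (if j ∈ S then 1 else 0) with hd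
  have hdsum : ∑ j, d j = 0 := by
    rw [hd]
    simp only [Finset.sum_sub_distrib]
    rw [hsum, Finset.sum_ite_mem]
    simp only [Finset.univ_inter, Finset.sum_const, hcard]
    simp
  have hkey : ∑ j, d j * μ j ≤ 0 := by
    have : ∑ j, d j * μ j = ∑ j, d j * (μ j - m) := by
      rw [show (∑ j, d j * (μ j - m)) = ∑ j, (d j * μ j - d j * m) from
        Finset.sum_congr rfl fun j _ => by ring, Finset.sum_sub_distrib,
        ← Finset.sum_mul, hdsum, zero_mul, sub_zero]
    rw [this]
    refine Finset.sum_nonpos fun j _ => ?_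
    by_cases hj : j ∈ S
    · have : d j ≤ 0 := by rw [hd]; simp [hj]; linarith [h1 j]
      exact mul_nonpos_iff.mpr (Or.inr ⟨this, by linarith [hge j hj]⟩)
    · have : 0 ≤ d j := by rw [hd]; simp [hj]; exact h0 j
      exact mul_nonpos_iff.mpr (Or.inl ⟨this, by linarith [hle j hj]⟩)
  have : ∑ j, c j * μ j ≤ ∑ j ∈ S, μ j := by
    have hsplit : ∑ j, c j * μ j = ∑ j, d j * μ j + ∑ j ∈ S, μ j := by
      rw [hd]
      rw [show (∑ j, (c j - if j ∈ S then 1 else 0) * μ j)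
          = ∑ j, (c j * μ j - (if j ∈ S then 1 else 0) * μ j) from
        Finset.sum_congr rfl fun j _ => by ring, Finset.sum_sub_distrib]
      have : ∑ j, (if j ∈ S then 1 else 0) * μ j = ∑ j ∈ S, μ j := by
        simp [ite_mul, Finset.sum_ite_mem]
      rw [this]; ring
    rw [hsplit]
    linarith
  exact this.trans (le_sumTopK μ S hcard)

section GG

variable (f : ℝ → ℝ)

noncomputable def Gfun (n k : ℕ) (A : Matrix (Fin n) (Fin n) ℂ) : ℝ :=
  ⨆ v : {v : Fin k → EuclideanSpace ℂ (Fin n) // Orthonormal ℂ v},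
    ∑ i, f (quadF A ((v : Fin k → EuclideanSpace ℂ (Fin n)) i))

lemma orthFam_nonempty (hkn : k ≤ n) :
    Nonempty {v : Fin k → EuclideanSpace ℂ (Fin n) // Orthonormal ℂ v} := by
  refine ⟨⟨fun i => EuclideanSpace.basisFun (Fin n) ℂ (Fin.castLE hkn i), ?_⟩⟩
  exact (EuclideanSpace.basisFun (Fin n) ℂ).orthonormal.comp _ (Fin.castLE_injective hkn)

lemma lip_abs (hflip : LipschitzWith 1 f) (x y : ℝ) : |f x - f y| ≤ |x - y| := by
  have := hflip.dist_le_mul x y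
  rw [Real.dist_eq, Real.dist_eq] at this
  simpa using this

lemma bddAbove_Gfun (hflip : LipschitzWith 1 f) (A : Matrix (Fin n) (Fin n) ℂ) :
    BddAbove (Set.range fun v : {v : Fin k → EuclideanSpace ℂ (Fin n) // Orthonormal ℂ v} =>
      ∑ i, f (quadF A ((v : Fin k → EuclideanSpace ℂ (Fin n)) i))) := by
  refine ⟨k * (f 0 + frobNorm A), ?_⟩
  rintro x ⟨v, rfl⟩
  calc ∑ i, f (quadF A ((v : Fin k → EuclideanSpace ℂ (Fin n)) i))
      ≤ ∑ _i : Fin k, (f 0 + frobNorm A) := by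
        refine Finset.sum_le_sum fun i _ => ?_
        have h1 := lip_abs f hflip (quadF A ((v : Fin k → EuclideanSpace ℂ (Fin n)) i)) 0
        have h2 := abs_quadF_le A (v.2.1 i)
        rw [sub_zero] at h1
        have h3 := (abs_le.mp h1).2
        linarith
    _ = k * (f 0 + frobNorm A) := by
        rw [Finset.sum_const, Finset.card_univ, Fintype.card_fin, nsmul_eq_mul]

lemma le_Gfun (hflip : LipschitzWith 1 f) (A : Matrix (Fin n) (Fin n) ℂ)
    {v : Fin k → EuclideanSpace ℂ (Fin n)} (hv : Orthonormal ℂ v) :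
    ∑ i, f (quadF A (v i)) ≤ Gfun f n k A :=
  le_ciSup (bddAbove_Gfun f hflip A) ⟨v, hv⟩

lemma Gfun_le (hkn : k ≤ n) (A : Matrix (Fin n) (Fin n) ℂ) (b : ℝ)
    (h : ∀ v : Fin k → EuclideanSpace ℂ (Fin n), Orthonormal ℂ v →
      ∑ i, f (quadF A (v i)) ≤ b) : Gfun f n k A ≤ b := by
  have := orthFam_nonempty (n := n) (k := k) hkn
  exact ciSup_le fun v => h v.1 v.2

lemma frobNorm_symm (A B : Matrix (Fin n) (Fin n) ℂ) :
    frobNorm (A - B) = frobNorm (B - A) := by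
  unfold frobNorm
  congr 1
  refine Finset.sum_congr rfl fun i _ => Finset.sum_congr rfl fun j _ => ?_
  rw [show (A - B) i j = A i j - B i j from rfl, show (B - A) i j = B i j - A i j from rfl,
    norm_sub_rev]

lemma Gfun_lipschitz (hkn : k ≤ n) (hflip : LipschitzWith 1 f)
    (A B : Matrix (Fin n) (Fin n) ℂ) :
    |Gfun f n k A - Gfun f n k B| ≤ Real.sqrt k * frobNorm (A - B) := by
  have key : ∀ A B : Matrix (Fin n) (Fin n) ℂ,
      Gfun f n k A ≤ Gfun f n k B + Real.sqrt k * frobNorm (A - B) := by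
    intro A B
    refine Gfun_le f hkn A _ fun v hv => ?_
    have hstep : ∑ i, f (quadF A (v i)) ≤ ∑ i, f (quadF B (v i))
        + ∑ i, |quadF (A - B) (v i)| := by
      rw [← Finset.sum_add_distrib]
      refine Finset.sum_le_sum fun i _ => ?_
      have := lip_abs f hflip (quadF A (v i)) (quadF B (v i))
      rw [quadF_sub]
      have h2 := (abs_le.mp this).2
      linarith [le_abs_self (quadF A (v i) - quadF B (v i))]
    have hsq : ∑ i, |quadF (A - B) (v i)| ≤ Real.sqrt k * frobNorm (A - B) := by
      have h1 : (∑ i, |quadF (A - B) (v i)|) ^ 2 ≤ k * frobNorm (A - B) ^ 2 := by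
        calc (∑ i, |quadF (A - B) (v i)|) ^ 2
            ≤ ((Finset.univ : Finset (Fin k)).card : ℝ) * ∑ i, |quadF (A - B) (v i)| ^ 2 :=
              sq_sum_le_card_mul_sum_sq
          _ = k * ∑ i, quadF (A - B) (v i) ^ 2 := by
              rw [Finset.card_univ, Fintype.card_fin]
              exact congrArg _ (Finset.sum_congr rfl fun i _ => sq_abs _)
          _ ≤ k * frobNorm (A - B) ^ 2 :=
              mul_le_mul_of_nonneg_left (sum_sq_quadF_le (A - B) hv) (by positivity)
      have h2 : 0 ≤ ∑ i, |quadF (A - B) (v i)| := Finset.sum_nonneg fun i _ => abs_nonneg _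
      calc ∑ i, |quadF (A - B) (v i)|
          = Real.sqrt ((∑ i, |quadF (A - B) (v i)|) ^ 2) := (Real.sqrt_sq h2).symm
        _ ≤ Real.sqrt (k * frobNorm (A - B) ^ 2) := Real.sqrt_le_sqrt h1
        _ = Real.sqrt k * frobNorm (A - B) := by
            rw [Real.sqrt_mul (by positivity), Real.sqrt_sq (frobNorm_nonneg _)]
    calc ∑ i, f (quadF A (v i)) ≤ ∑ i, f (quadF B (v i)) + ∑ i, |quadF (A - B) (v i)| := hstep
      _ ≤ Gfun f n k B + Real.sqrt k * frobNorm (A - B) :=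
          add_le_add (le_Gfun f hflip B hv) hsq
  rw [abs_sub_le_iff]
  constructor
  · linarith [key A B]
  · have := key B A
    rw [frobNorm_symm B A] at this
    linarith

lemma Gfun_convex (hkn : k ≤ n) (hfconv : ConvexOn ℝ Set.univ f)
    (hflip : LipschitzWith 1 f) :
    ConvexOn ℝ Set.univ (Gfun f n k) := by
  refine ⟨convex_univ, fun A _ B _ a b ha hb hab => ?_⟩
  refine Gfun_le f hkn _ _ fun v hv => ?_
  calc ∑ i, f (quadF (a • A + b • B) (v i))
      = ∑ i, f (a * quadF A (v i) + b * quadF B (v i)) := by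
        refine Finset.sum_congr rfl fun i _ => ?_
        rw [quadF_combo]
    _ ≤ ∑ i, (a * f (quadF A (v i)) + b * f (quadF B (v i))) := by
        refine Finset.sum_le_sum fun i _ => ?_
        have := hfconv.2 (Set.mem_univ (quadF A (v i))) (Set.mem_univ (quadF B (v i))) ha hb hab
        simpa [smul_eq_mul] using this
    _ = a * ∑ i, f (quadF A (v i)) + b * ∑ i, f (quadF B (v i)) := by
        rw [Finset.sum_add_distrib, ← Finset.mul_sum, ← Finset.mul_sum]
    _ ≤ a * Gfun f n k A + b * Gfun f n k B :=
        add_le_add (mul_le_mul_of_nonneg_left (le_Gfun f hflip A hv) ha)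
          (mul_le_mul_of_nonneg_left (le_Gfun f hflip B hv) hb)

/-- The central identity: on Hermitian matrices, `Gfun` computes the top-`k` sum of `f` applied
to the eigenvalues. -/
lemma Gfun_eq_sumTopK (hk1 : 1 ≤ k) (hkn : k ≤ n) (hfconv : ConvexOn ℝ Set.univ f)
    (hflip : LipschitzWith 1 f) {A : Matrix (Fin n) (Fin n) ℂ} (hA : A.IsHermitian) :
    Gfun f n k A = sumTopK k (fun i => f (hA.eigenvalues i)) := by
  classical
  set u := hA.eigenvectorBasis with hu
  apply le_antisymm
  · -- ≤ : Jensen + Bessel + rearrangement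
    refine Gfun_le f hkn A _ fun v hv => ?_
    set w : Fin k → Fin n → ℝ := fun i j => ‖(inner ℂ (u j) (v i) : ℂ)‖ ^ 2 with hw
    have hw0 : ∀ i j, 0 ≤ w i j := fun i j => by positivity
    have hwsum : ∀ i, ∑ j, w i j = 1 := by
      intro i
      have h1 : (∑ j, (inner ℂ (v i) (u j) : ℂ) * (inner ℂ (u j) (v i) : ℂ))
          = (inner ℂ (v i) (v i) : ℂ) := u.sum_inner_mul_inner (v i) (v i)
      have h2 : ∀ j, (inner ℂ (v i) (u j) : ℂ) * (inner ℂ (u j) (v i) : ℂ)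
          = ((w i j : ℝ) : ℂ) := by
        intro j
        rw [← inner_conj_symm (u j) (v i), Complex.mul_conj, hw]
        rw [Complex.normSq_eq_norm_sq]
        norm_cast
        rw [← norm_inner_symm]
      rw [Finset.sum_congr rfl fun j _ => h2 j] at h1
      have h3 : (inner ℂ (v i) (v i) : ℂ) = ((1 : ℝ) : ℂ) := by
        rw [@inner_self_eq_norm_sq_to_K ℂ]
        rw [hv.1 i]
        norm_num
      rw [h3] at h1
      exact Complex.ofReal_injective (by push_cast; push_cast at h1; exact h1)
    have hquad : ∀ i, quadF A (v i) = ∑ j, hA.eigenvalues j * w i j := fun i =>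
      quadF_eq_sum_eigen hA (v i)
    have hjensen : ∀ i, f (quadF A (v i)) ≤ ∑ j, w i j * f (hA.eigenvalues j) := by
      intro i
      rw [hquad i]
      have := hfconv.map_sum_le (t := Finset.univ) (w := w i) (p := hA.eigenvalues)
        (fun j _ => hw0 i j) (hwsum i) (fun j _ => Set.mem_univ _)
      calc f (∑ j, hA.eigenvalues j * w i j)
          = f (∑ j, w i j • hA.eigenvalues j) := by
            congr 1; exact Finset.sum_congr rfl fun j _ => by rw [smul_eq_mul]; ring
        _ ≤ ∑ j, w i j • f (hA.eigenvalues j) := this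
        _ = ∑ j, w i j * f (hA.eigenvalues j) := by simp [smul_eq_mul]
    set c : Fin n → ℝ := fun j => ∑ i, w i j with hc
    have hc0 : ∀ j, 0 ≤ c j := fun j => Finset.sum_nonneg fun i _ => hw0 i j
    have hc1 : ∀ j, c j ≤ 1 := by
      intro j
      have h := hv.sum_inner_products_le (s := Finset.univ) (u j)
      have h2 : ∑ i, w i j ≤ ‖u j‖ ^ 2 := by
        refine le_trans (le_of_eq ?_) h
        exact Finset.sum_congr rfl fun i _ => by rw [hw, norm_inner_symm]
      rwa [u.orthonormal.1 j, one_pow] at h2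
    have hcsum : ∑ j, c j = (k : ℝ) := by
      rw [hc]
      rw [Finset.sum_comm]
      rw [Finset.sum_congr rfl fun i (_ : i ∈ Finset.univ) => hwsum i]
      simp
    calc ∑ i, f (quadF A (v i)) ≤ ∑ i, ∑ j, w i j * f (hA.eigenvalues j) :=
          Finset.sum_le_sum fun i _ => hjensen i
      _ = ∑ j, c j * f (hA.eigenvalues j) := by
          rw [Finset.sum_comm]
          exact Finset.sum_congr rfl fun j _ => by rw [hc, Finset.sum_mul]
      _ ≤ sumTopK k (fun i => f (hA.eigenvalues i)) :=
          weighted_le_sumTopK hk1 hkn _ c hc0 hc1 hcsum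
  · -- ≥ : witness by eigenvectors
    refine sumTopK_le hkn _ _ fun s hs => ?_
    set emb := s.orderEmbOfFin hs with hemb
    set v : Fin k → EuclideanSpace ℂ (Fin n) := fun i => u (emb i) with hV
    have hvon : Orthonormal ℂ v := u.orthonormal.comp _ emb.injective
    have hqv : ∀ i, quadF A (v i) = hA.eigenvalues (emb i) := by
      intro i
      rw [hV]
      rw [quadF_eq_sum_eigen hA]
      rw [Finset.sum_eq_single (emb i)]
      · rw [show (inner ℂ (u (emb i)) (u (emb i)) : ℂ) = ((1:ℝ):ℂ) by
          rw [@inner_self_eq_norm_sq_to_K ℂ, u.orthonormal.1 (emb i)]; norm_num]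
        norm_num
      · intro j _ hj
        rw [u.orthonormal.2 hj]
        norm_num
      · intro h; exact absurd (Finset.mem_univ _) h
    have hsum : ∑ i, f (quadF A (v i)) = ∑ j ∈ s, f (hA.eigenvalues j) := by
      rw [Finset.sum_congr rfl fun i (_ : i ∈ Finset.univ) => by rw [hqv i]]
      have himg : Finset.image (fun i => emb i) Finset.univ = s := by
        apply Finset.coe_injective
        rw [Finset.coe_image, Finset.coe_univ, Set.image_univ]
        exact s.range_orderEmbOfFin hs
      rw [← himg, Finset.sum_image (fun a _ b _ h => emb.injective h)]
    rw [← hsum]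
    exact le_Gfun f hflip A hvon

end GG


/-- concentration of truncated linear spectral statistics: if the random
Hermitian matrix `X` has the convex concentration property with constant `c > 0` and
`f : ℝ → ℝ` is convex, `1`-Lipschitz and attains its infimum, then for any `t > 0`,
`P(|tr_[k] f(X) − E tr_[k] f(X)| > t) ≤ c⁻¹ exp(−c t²/k)`. -/
theorem stmt_7 {n k : ℕ} (hk1 : 1 ≤ k) (hkn : k ≤ n)
    {Ω : Type*} [MeasurableSpace Ω] (P : Measure Ω) [IsProbabilityMeasure P]
    (X : Ω → Matrix (Fin n) (Fin n) ℂ)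
    (hXmeas : ∀ i j, Measurable fun ω => X ω i j)
    (hXherm : ∀ ω, (X ω).IsHermitian)
    (c : ℝ) (hc : 0 < c)
    (hconc : ∀ g : Matrix (Fin n) (Fin n) ℂ → ℝ, ConvexOn ℝ Set.univ g →
      (∀ A B, |g A - g B| ≤ frobNorm (A - B)) →
      ∀ t > (0 : ℝ),
        (P {ω | t < |g (X ω) - ∫ ω', g (X ω') ∂P|}).toReal ≤
          c⁻¹ * Real.exp (-c * t ^ 2))
    (f : ℝ → ℝ) (hfconv : ConvexOn ℝ Set.univ f) (hflip : LipschitzWith 1 f)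
    (hinf : ∃ x₀ : ℝ, ∀ x, f x₀ ≤ f x)
    (t : ℝ) (ht : 0 < t) :
    (P {ω | t < |sumTopK k (fun i => f ((hXherm ω).eigenvalues i)) -
        ∫ ω', sumTopK k (fun i => f ((hXherm ω').eigenvalues i)) ∂P|}).toReal ≤
      c⁻¹ * Real.exp (-c * t ^ 2 / k) := by
  have hk0 : (0 : ℝ) < k := by exact_mod_cast Nat.lt_of_lt_of_le Nat.zero_lt_one hk1
  set s := Real.sqrt k with hsdef
  have hs : 0 < s := Real.sqrt_pos.mpr hk0
  have hs2 : s ^ 2 = (k : ℝ) := Real.sq_sqrt hk0.le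
  set g : Matrix (Fin n) (Fin n) ℂ → ℝ := fun A => s⁻¹ * Gfun f n k A with hg
  have hgconv : ConvexOn ℝ Set.univ g := by
    have h := (Gfun_convex f hkn hfconv hflip).smul (inv_nonneg.mpr hs.le)
    simpa [hg, smul_eq_mul] using h
  have hglip : ∀ A B, |g A - g B| ≤ frobNorm (A - B) := by
    intro A B
    rw [hg]
    dsimp only
    rw [← mul_sub, abs_mul, abs_of_nonneg (inv_nonneg.mpr hs.le)]
    calc s⁻¹ * |Gfun f n k A - Gfun f n k B| ≤ s⁻¹ * (s * frobNorm (A - B)) :=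
          mul_le_mul_of_nonneg_left (Gfun_lipschitz f hkn hflip A B) (inv_nonneg.mpr hs.le)
      _ = frobNorm (A - B) := by field_simp
  have hts : 0 < t / s := div_pos ht hs
  have hmain := hconc g hgconv hglip (t / s) hts
  have hgX : ∀ ω, g (X ω) = s⁻¹ * sumTopK k (fun i => f ((hXherm ω).eigenvalues i)) := by
    intro ω
    rw [hg]
    dsimp only
    rw [Gfun_eq_sumTopK f hk1 hkn hfconv hflip (hXherm ω)]
  have hint : (∫ ω', g (X ω') ∂P)
      = s⁻¹ * ∫ ω', sumTopK k (fun i => f ((hXherm ω').eigenvalues i)) ∂P := by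
    rw [show (fun ω' => g (X ω'))
        = fun ω' => s⁻¹ * sumTopK k (fun i => f ((hXherm ω').eigenvalues i)) from funext hgX]
    exact MeasureTheory.integral_const_mul _ _
  have hset : {ω | t / s < |g (X ω) - ∫ ω', g (X ω') ∂P|}
      = {ω | t < |sumTopK k (fun i => f ((hXherm ω).eigenvalues i)) -
          ∫ ω', sumTopK k (fun i => f ((hXherm ω').eigenvalues i)) ∂P|} := by
    ext ω
    simp only [Set.mem_setOf_eq]
    rw [hgX ω, hint, ← mul_sub, abs_mul, abs_of_nonneg (inv_nonneg.mpr hs.le),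
      inv_mul_eq_div]
    exact div_lt_div_iff_of_pos_right hs
  rw [hset] at hmain
  refine hmain.trans (le_of_eq ?_)
  congr 1
  rw [div_pow, hs2, ← mul_div_assoc]
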